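/- L²-norm splitting under translations: let u_n ⇀ u₀ weakly in H¹(ℝ^N), let y_n ∈ ℝ^N with |y_n| → ∞, and suppose u_n(· + y_n) ⇀ φ₀ weakly in H¹(ℝ^N). Then ‖u_n − u₀ − φ₀(· − y_n)‖₂² = ‖u_n‖₂² − ‖u₀‖₂² − ‖φ₀‖₂² + o(1) as n → ∞. In particular, if ‖u_n‖₂ = ξ for all n, then ‖φ₀‖₂² ≤ ξ² − ‖u₀‖₂². -/

import Mathlib

open MeasureTheory Filter Topology

noncomputable section

abbrev Sp (N : ℕ) := EuclideanSpace ℝ (Fin N)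

/-- `∫ |∇u|²` (with `fderiv` as the gradient). -/
def gradNormSq {N : ℕ} (u : Sp N → ℝ) : ℝ := ∫ x, ‖fderiv ℝ u x‖ ^ 2

/-- `∫ u²`, the square of the `L²` norm. -/
def l2Sq {N : ℕ} (u : Sp N → ℝ) : ℝ := ∫ x, (u x) ^ 2

/-- The `L^t` norm. -/
def lpNorm {N : ℕ} (t : ℝ) (u : Sp N → ℝ) : ℝ := (∫ x, |u x| ^ t) ^ (1 / t)

/-- The nonlocal Choquard energy term
`B(u,p) = ∫∫ |u x|^p |u y|^p / |x-y|^(N-α)`. -/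
def Bfun {N : ℕ} (α p : ℝ) (u : Sp N → ℝ) : ℝ :=
  ∫ x, ∫ y, |u x| ^ p * |u y| ^ p / ‖x - y‖ ^ ((N : ℝ) - α)

/-- Membership in `H¹(ℝ^N)`: `u ∈ L²` and `∇u ∈ L²`. -/
def H1 (N : ℕ) : Set (Sp N → ℝ) :=
  {u | MemLp u 2 volume ∧ MemLp (fun x => fderiv ℝ u x) 2 volume}

/-- Weak convergence in `L²` tested against `L²` functions. -/
def WeakL2 {N : ℕ} (u : ℕ → Sp N → ℝ) (u₀ : Sp N → ℝ) : Prop :=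
  ∀ w : Sp N → ℝ, MemLp w 2 volume →
    Tendsto (fun n => ∫ x, u n x * w x) atTop (𝓝 (∫ x, u₀ x * w x))

/-- Weak convergence of the gradients tested against `L²` vector fields. -/
def WeakGrad {N : ℕ} (u : ℕ → Sp N → ℝ) (u₀ : Sp N → ℝ) : Prop :=
  ∀ w : Sp N → Sp N, MemLp w 2 volume →
    Tendsto (fun n => ∫ x, fderiv ℝ (u n) x (w x)) atTop
      (𝓝 (∫ x, fderiv ℝ u₀ x (w x)))

/-- Weak convergence in `H¹`. -/
def WeakH1 {N : ℕ} (u : ℕ → Sp N → ℝ) (u₀ : Sp N → ℝ) : Prop :=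
  WeakL2 u u₀ ∧ WeakGrad u u₀

/-!
Expanding the square, the defect `‖uₙ - u₀ - φ₀(· - yₙ)‖² - (‖uₙ‖² - ‖u₀‖² - ‖φ₀‖²)` equals
`2 (‖u₀‖² - ⟪uₙ, u₀⟫) + 2 (‖φ₀‖² - ⟪uₙ(· + yₙ), φ₀⟫) + 2 ⟪u₀, φ₀(· - yₙ)⟫`
by translation invariance of Lebesgue measure. The first two terms vanish in the limit by the two
weak convergences. The last one does because compactly supported approximations of `u₀` and `φ₀`
have disjoint supports once `|yₙ|` is large, while Cauchy–Schwarz bounds the approximation errors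
uniformly in `n`. The bound on `‖φ₀‖²` then follows from the nonnegativity of
`‖uₙ - u₀ - φ₀(· - yₙ)‖²`.
-/

open scoped InnerProductSpace

theorem tendsto_nhds_zero_of_forall_eventually_abs_le {ι : Type*} {l : Filter ι} {a : ι → ℝ}
    {b : ℝ → ℝ} (hb : Tendsto b (𝓝[>] 0) (𝓝 0)) (h : ∀ δ > 0, ∀ᶠ n in l, |a n| ≤ b δ) :
    Tendsto a l (𝓝 0) := by
  rw [Metric.tendsto_nhds]
  intro ε hε
  obtain ⟨δ, hbδ, hδ⟩ := ((hb.eventually (gt_mem_nhds hε)).and self_mem_nhdsWithin).exists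
  filter_upwards [h δ hδ] with n hn
  rw [Real.dist_eq, sub_zero]
  exact hn.trans_lt hbδ

theorem eventually_mul_comp_sub_eq_zero {E R : Type*} [SeminormedAddCommGroup E] [MulZeroClass R]
    {ι : Type*} {l : Filter ι} {f g : E → R} (hf : HasCompactSupport f) (hg : HasCompactSupport g)
    {y : ι → E} (hy : Tendsto (fun n => ‖y n‖) l atTop) :
    ∀ᶠ n in l, ∀ x, f x * g (x - y n) = 0 := by
  obtain ⟨R, hR⟩ := (hf.isBounded.union hg.isBounded).subset_closedBall 0
  filter_upwards [hy.eventually_gt_atTop (2 * R)] with n hn x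
  by_contra hfg
  have hx : ‖x‖ ≤ R := by
    simpa using hR (Or.inl (subset_tsupport f (left_ne_zero_of_mul hfg)))
  have hxy : ‖x - y n‖ ≤ R := by
    simpa using hR (Or.inr (subset_tsupport g (right_ne_zero_of_mul hfg)))
  have := norm_sub_le x (x - y n)
  rw [sub_sub_cancel] at this
  linarith

namespace MeasureTheory

section L2

variable {α : Type*} [MeasurableSpace α] {μ : Measure α} {f g : α → ℝ}

theorem MemLp.integral_mul_eq_inner (hf : MemLp f 2 μ) (hg : MemLp g 2 μ) :
    ∫ x, f x * g x ∂μ = ⟪hf.toLp f, hg.toLp g⟫_ℝ := by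
  rw [L2.inner_def]
  refine integral_congr_ae ?_
  filter_upwards [hf.coeFn_toLp, hg.coeFn_toLp] with x hfx hgx
  simp [hfx, hgx, mul_comm]

theorem MemLp.abs_integral_mul_le (hf : MemLp f 2 μ) (hg : MemLp g 2 μ) :
    |∫ x, f x * g x ∂μ| ≤ (eLpNorm f 2 μ).toReal * (eLpNorm g 2 μ).toReal := by
  rw [hf.integral_mul_eq_inner hg, ← Lp.norm_toLp f hf, ← Lp.norm_toLp g hg]
  exact abs_real_inner_le_norm _ _

theorem integral_sub_sub_sq_sub {a b c : α → ℝ}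
    (ha : MemLp a 2 μ) (hb : MemLp b 2 μ) (hc : MemLp c 2 μ) :
    ∫ x, (a x - b x - c x) ^ 2 ∂μ
        - (∫ x, a x ^ 2 ∂μ - ∫ x, b x ^ 2 ∂μ - ∫ x, c x ^ 2 ∂μ) =
      2 * (∫ x, b x * b x ∂μ - ∫ x, a x * b x ∂μ)
        + 2 * (∫ x, c x * c x ∂μ - ∫ x, a x * c x ∂μ) + 2 * ∫ x, b x * c x ∂μ := by
  have habc : MemLp (fun x => a x - b x - c x) 2 μ := (ha.sub hb).sub hc
  simp only [sq]
  rw [habc.integral_mul_eq_inner habc, ha.integral_mul_eq_inner ha, hb.integral_mul_eq_inner hb,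
    hc.integral_mul_eq_inner hc, ha.integral_mul_eq_inner hb, ha.integral_mul_eq_inner hc,
    hb.integral_mul_eq_inner hc]
  change ⟪ha.toLp a - hb.toLp b - hc.toLp c, ha.toLp a - hb.toLp b - hc.toLp c⟫_ℝ - _ = _
  simp only [inner_sub_left, inner_sub_right, real_inner_comm (ha.toLp a),
    real_inner_comm (hb.toLp b) (hc.toLp c)]
  ring

end L2

section Translation

variable {E : Type*} [NormedAddCommGroup E] [MeasurableSpace E] [BorelSpace E]
  {μ : Measure E} [μ.IsAddRightInvariant] {f g : E → ℝ}

theorem MemLp.comp_sub_right (hg : MemLp g 2 μ) (z : E) : MemLp (fun x => g (x - z)) 2 μ :=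
  hg.comp_measurePreserving (measurePreserving_sub_right μ z)

theorem MemLp.abs_integral_mul_comp_sub_le (hf : MemLp f 2 μ) (hg : MemLp g 2 μ) (z : E) :
    |∫ x, f x * g (x - z) ∂μ| ≤ (eLpNorm f 2 μ).toReal * (eLpNorm g 2 μ).toReal := by
  rw [← eLpNorm_comp_measurePreserving hg.1 (measurePreserving_sub_right μ z)]
  exact hf.abs_integral_mul_le (hg.comp_sub_right z)

theorem integral_mul_comp_sub_right (f g : E → ℝ) (z : E) :
    ∫ x, f x * g (x - z) ∂μ = ∫ x, f (x + z) * g x ∂μ := by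
  simpa using integral_sub_right_eq_self (fun x => f (x + z) * g x) z (μ := μ)

theorem tendsto_integral_mul_comp_sub_nhds_zero [WeaklyLocallyCompactSpace E] [μ.Regular]
    (hf : MemLp f 2 μ) (hg : MemLp g 2 μ) {ι : Type*} {l : Filter ι} {y : ι → E}
    (hy : Tendsto (fun n => ‖y n‖) l atTop) :
    Tendsto (fun n => ∫ x, f x * g (x - y n) ∂μ) l (𝓝 0) := by
  set A := (eLpNorm f 2 μ).toReal
  set B := (eLpNorm g 2 μ).toReal
  refine tendsto_nhds_zero_of_forall_eventually_abs_le (b := fun δ => δ * B + (A + δ) * δ)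
    ?_ fun δ hδ => ?_
  · have hb : Continuous fun δ : ℝ => δ * B + (A + δ) * δ := by fun_prop
    simpa using tendsto_nhdsWithin_of_tendsto_nhds (hb.tendsto 0)
  have hδ' : ENNReal.ofReal δ ≠ 0 := (ENNReal.ofReal_pos.2 hδ).ne'
  obtain ⟨f', hf'c, hff', -, hf'⟩ :=
    hf.exists_hasCompactSupport_eLpNorm_sub_le ENNReal.ofNat_ne_top hδ'
  obtain ⟨g', hg'c, hgg', -, hg'⟩ :=
    hg.exists_hasCompactSupport_eLpNorm_sub_le ENNReal.ofNat_ne_top hδ'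
  have hff'δ : (eLpNorm (f - f') 2 μ).toReal ≤ δ := ENNReal.toReal_le_of_le_ofReal hδ.le hff'
  have hgg'δ : (eLpNorm (g - g') 2 μ).toReal ≤ δ := ENNReal.toReal_le_of_le_ofReal hδ.le hgg'
  have hf'A : (eLpNorm f' 2 μ).toReal ≤ A + δ :=
    calc (eLpNorm f' 2 μ).toReal = ‖hf.toLp f - (hf.sub hf').toLp (f - f')‖ := by
          rw [MemLp.toLp_sub hf hf', sub_sub_cancel, Lp.norm_toLp]
      _ ≤ ‖hf.toLp f‖ + ‖(hf.sub hf').toLp (f - f')‖ := norm_sub_le _ _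
      _ ≤ A + δ := by
          rw [Lp.norm_toLp, Lp.norm_toLp]
          exact add_le_add le_rfl hff'δ
  filter_upwards [eventually_mul_comp_sub_eq_zero hf'c hg'c hy] with n hn
  -- with `f'` and `g'` eventually disjointly supported, only the approximation errors remain
  have hsplit : ∫ x, f x * g (x - y n) ∂μ =
      ∫ x, (f - f') x * g (x - y n) ∂μ + ∫ x, f' x * (g - g') (x - y n) ∂μ := by
    have h₁ : Integrable (fun x => (f - f') x * g (x - y n)) μ :=
      (hf.sub hf').integrable_mul (hg.comp_sub_right (y n))
    have h₂ : Integrable (fun x => f' x * (g - g') (x - y n)) μ :=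
      hf'.integrable_mul ((hg.sub hg').comp_sub_right (y n))
    rw [← integral_add h₁ h₂]
    refine integral_congr_ae (Eventually.of_forall fun x => ?_)
    simp only [Pi.sub_apply]
    linear_combination hn x
  calc |∫ x, f x * g (x - y n) ∂μ|
      ≤ |∫ x, (f - f') x * g (x - y n) ∂μ| + |∫ x, f' x * (g - g') (x - y n) ∂μ| :=
        hsplit ▸ abs_add_le _ _
    _ ≤ δ * B + (A + δ) * δ := by
        gcongr
        · exact ((hf.sub hf').abs_integral_mul_comp_sub_le hg (y n)).trans
            (mul_le_mul_of_nonneg_right hff'δ ENNReal.toReal_nonneg)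
        · exact (hf'.abs_integral_mul_comp_sub_le (hg.sub hg') (y n)).trans
            (mul_le_mul hf'A hgg'δ ENNReal.toReal_nonneg (by positivity))

theorem tendsto_integral_sub_sub_sq_sub [WeaklyLocallyCompactSpace E] [μ.Regular]
    {ι : Type*} {l : Filter ι} {u : ι → E → ℝ} {u₀ φ₀ : E → ℝ} {y : ι → E}
    (hu : ∀ n, MemLp (u n) 2 μ) (hu₀ : MemLp u₀ 2 μ) (hφ₀ : MemLp φ₀ 2 μ)
    (hweak : Tendsto (fun n => ∫ x, u n x * u₀ x ∂μ) l (𝓝 (∫ x, u₀ x * u₀ x ∂μ)))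
    (hweak' : Tendsto (fun n => ∫ x, u n (x + y n) * φ₀ x ∂μ) l (𝓝 (∫ x, φ₀ x * φ₀ x ∂μ)))
    (hy : Tendsto (fun n => ‖y n‖) l atTop) :
    Tendsto (fun n => ∫ x, (u n x - u₀ x - φ₀ (x - y n)) ^ 2 ∂μ
        - (∫ x, u n x ^ 2 ∂μ - ∫ x, u₀ x ^ 2 ∂μ - ∫ x, φ₀ x ^ 2 ∂μ)) l (𝓝 0) := by
  have hexpand : ∀ n, ∫ x, (u n x - u₀ x - φ₀ (x - y n)) ^ 2 ∂μ
        - (∫ x, u n x ^ 2 ∂μ - ∫ x, u₀ x ^ 2 ∂μ - ∫ x, φ₀ x ^ 2 ∂μ) =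
      2 * (∫ x, u₀ x * u₀ x ∂μ - ∫ x, u n x * u₀ x ∂μ)
        + 2 * (∫ x, φ₀ x * φ₀ x ∂μ - ∫ x, u n (x + y n) * φ₀ x ∂μ)
        + 2 * ∫ x, u₀ x * φ₀ (x - y n) ∂μ := fun n => by
    have hsq : ∫ x, φ₀ (x - y n) ^ 2 ∂μ = ∫ x, φ₀ x ^ 2 ∂μ :=
      integral_sub_right_eq_self (fun x => φ₀ x ^ 2) (y n)
    have hmul : ∫ x, φ₀ (x - y n) * φ₀ (x - y n) ∂μ = ∫ x, φ₀ x * φ₀ x ∂μ :=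
      integral_sub_right_eq_self (fun x => φ₀ x * φ₀ x) (y n)
    rw [← hsq, integral_sub_sub_sq_sub (hu n) hu₀ (hφ₀.comp_sub_right (y n)), hmul,
      integral_mul_comp_sub_right (u n)]
  simp_rw [hexpand]
  simpa using (((hweak.const_sub (∫ x, u₀ x * u₀ x ∂μ)).const_mul 2).add
    ((hweak'.const_sub (∫ x, φ₀ x * φ₀ x ∂μ)).const_mul 2)).add
    ((tendsto_integral_mul_comp_sub_nhds_zero hu₀ hφ₀ hy).const_mul 2)

end Translation

end MeasureTheory

theorem l2_splitting_general (N : ℕ) (ξ : ℝ)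
    (u : ℕ → Sp N → ℝ) (u₀ φ₀ : Sp N → ℝ) (y : ℕ → Sp N)
    (hu : ∀ n, u n ∈ H1 N) (hu₀ : u₀ ∈ H1 N) (hφ₀ : φ₀ ∈ H1 N)
    (hweak : WeakH1 u u₀)
    (hy : Tendsto (fun n => ‖y n‖) atTop atTop)
    (hweak' : WeakH1 (fun n x => u n (x + y n)) φ₀) :
    Tendsto (fun n =>
        l2Sq (fun x => u n x - u₀ x - φ₀ (x - y n))
          - (l2Sq (u n) - l2Sq u₀ - l2Sq φ₀)) atTop (𝓝 0) ∧
    ((∀ n, l2Sq (u n) = ξ ^ 2) → l2Sq φ₀ ≤ ξ ^ 2 - l2Sq u₀) := by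
  have hsplit := tendsto_integral_sub_sub_sq_sub (fun n => (hu n).1) hu₀.1 hφ₀.1
    (hweak.1 u₀ hu₀.1) (hweak'.1 φ₀ hφ₀.1) hy
  refine ⟨hsplit, fun hnorm => ?_⟩
  have hdefect : ∀ n, -(ξ ^ 2 - l2Sq u₀ - l2Sq φ₀) ≤ l2Sq (fun x => u n x - u₀ x - φ₀ (x - y n))
      - (l2Sq (u n) - l2Sq u₀ - l2Sq φ₀) := fun n => by
    have : 0 ≤ l2Sq (fun x => u n x - u₀ x - φ₀ (x - y n)) :=
      integral_nonneg fun x => sq_nonneg _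
    rw [hnorm n]
    linarith
  linarith [ge_of_tendsto' hsplit hdefect]

/-- `L²`-norm splitting under translations going to infinity. -/
theorem l2_splitting (N : ℕ) (hN : 1 ≤ N) (ξ : ℝ) (hξ : 0 < ξ)
    (u : ℕ → Sp N → ℝ) (u₀ φ₀ : Sp N → ℝ) (y : ℕ → Sp N)
    (hu : ∀ n, u n ∈ H1 N) (hu₀ : u₀ ∈ H1 N) (hφ₀ : φ₀ ∈ H1 N)
    (hweak : WeakH1 u u₀)
    (hy : Tendsto (fun n => ‖y n‖) atTop atTop)
    (hweak' : WeakH1 (fun n x => u n (x + y n)) φ₀) :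
    Tendsto (fun n =>
        l2Sq (fun x => u n x - u₀ x - φ₀ (x - y n))
          - (l2Sq (u n) - l2Sq u₀ - l2Sq φ₀)) atTop (𝓝 0) ∧
    ((∀ n, l2Sq (u n) = ξ ^ 2) → l2Sq φ₀ ≤ ξ ^ 2 - l2Sq u₀) :=
  l2_splitting_general N ξ u u₀ φ₀ y hu hu₀ hφ₀ hweak hy hweak'
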